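/- Let G be a simple graph on a countable vertex set and let W be a set of vertices of G. Then W is an independent subgraph of G if and only if there exists a perfect matching of the induced subgraph G[W] that is an independent matching of G. -/

import Mathlib

/-!
Suppose `M` and `M₀` are matchings with the same support `W`, and `M` has a proper augmenting
path `P` from `s ∉ W`. Flipping `M` along `P` gives a matching `M'` covering `W ∪ {s}` in which
`s` is matched to the second vertex of `P`, a vertex of `W`. Starting at `s` and following
`M'`-edges and `M₀`-edges alternately, for as long as `M₀` covers the current vertex, traces a
path in `M' ∆ M₀` (`s` is uncovered by `M₀`, so the walk never closes up). It is an
`M₀`-augmenting path, and it is proper because its second edge lies in `M₀`.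
-/

namespace PaperMatchings

variable {V : Type*}

/-- The support of a set of edges: all vertices incident to some edge in `M`. -/
def supp (M : Set (Sym2 V)) : Set V := {v | ∃ e ∈ M, v ∈ e}

/-- `M` is a matching of `G`: a set of edges of `G` such that no vertex is
incident to more than one edge of `M`. -/
def IsMatching (G : SimpleGraph V) (M : Set (Sym2 V)) : Prop :=
  M ⊆ G.edgeSet ∧ ∀ (v : V), ∀ e ∈ M, ∀ e' ∈ M, v ∈ e → v ∈ e' → e = e'

/-- A perfect matching: a matching whose support is all of `V`. -/
def IsPerfectMatching (G : SimpleGraph V) (M : Set (Sym2 V)) : Prop :=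
  IsMatching G M ∧ supp M = Set.univ

/-- A (finite or infinite) path in `G`, given by its number of vertices `n : ℕ∞`
(`⊤` meaning infinite) and the enumeration `f` of its vertices: it is injective on
indices below `n` and consecutive vertices are adjacent. -/
def IsPath (G : SimpleGraph V) (n : ℕ∞) (f : ℕ → V) : Prop :=
  1 ≤ n ∧
  (∀ i j : ℕ, (i : ℕ∞) < n → (j : ℕ∞) < n → f i = f j → i = j) ∧
  (∀ i : ℕ, ((i : ℕ∞) + 1) < n → G.Adj (f i) (f (i + 1)))

/-- The consecutive edges of the path lie alternately in `M` and outside `M`. -/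
def IsAlternating (M : Set (Sym2 V)) (n : ℕ∞) (f : ℕ → V) : Prop :=
  ∀ i : ℕ, ((i : ℕ∞) + 2) < n →
    (s(f i, f (i + 1)) ∈ M ↔ s(f (i + 1), f (i + 2)) ∉ M)

/-- An `M`-augmenting path starting at `s`: an `M`-alternating path (with at least one
edge) starting at the unmatched vertex `s`, which is either infinite or ends at an
unmatched vertex. -/
def IsAugmentingPath (G : SimpleGraph V) (M : Set (Sym2 V)) (n : ℕ∞) (f : ℕ → V)
    (s : V) : Prop :=
  IsPath G n f ∧ IsAlternating M n f ∧ 1 < n ∧ f 0 = s ∧ s ∉ supp M ∧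
  ∀ k : ℕ, n = (k : ℕ∞) + 1 → f k ∉ supp M

/-- The path contains at least one edge of `M`. -/
def IsProper (M : Set (Sym2 V)) (n : ℕ∞) (f : ℕ → V) : Prop :=
  ∃ i : ℕ, ((i : ℕ∞) + 1) < n ∧ s(f i, f (i + 1)) ∈ M

/-- Condition (A): for every matching `M` and every vertex `s` not in the support
of `M` there is an `M`-augmenting path starting at `s`. -/
def ConditionA (G : SimpleGraph V) : Prop :=
  ∀ M : Set (Sym2 V), IsMatching G M → ∀ s : V, s ∉ supp M →
    ∃ (n : ℕ∞) (f : ℕ → V), IsAugmentingPath G M n f s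

/-- An independent matching: a matching admitting no proper augmenting path. -/
def IndepMatching (G : SimpleGraph V) (M : Set (Sym2 V)) : Prop :=
  IsMatching G M ∧
    ¬ ∃ (s : V) (n : ℕ∞) (f : ℕ → V), IsAugmentingPath G M n f s ∧ IsProper M n f

/-- The induced subgraph of `G` on the vertex set `S` (vertices outside `S`
become isolated). -/
def restrict (G : SimpleGraph V) (S : Set V) : SimpleGraph V where
  Adj u v := G.Adj u v ∧ u ∈ S ∧ v ∈ S
  symm := by
    constructor
    intro u v h
    exact ⟨h.1.symm, h.2.2, h.2.1⟩
  loopless := by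
    constructor
    intro v h
    exact G.ne_of_adj h.1 rfl

/-- `W` is an independent subgraph of `G`: the induced subgraph `G[W]` has a perfect
matching (i.e. `G` has a matching with support exactly `W`) and every such matching
is an independent matching of `G`. -/
def IndepSubgraph (G : SimpleGraph V) (W : Set V) : Prop :=
  (∃ M, IsMatching G M ∧ supp M = W) ∧
  ∀ M, IsMatching G M → supp M = W → IndepMatching G M

/-- The induced subgraph `G[W]` satisfies condition (A): for every matching of
`G[W]` and every vertex of `W` not in its support, there is an augmenting path
inside `G[W]`. -/
def ConditionAOn (G : SimpleGraph V) (W : Set V) : Prop :=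
  ∀ M : Set (Sym2 V), IsMatching (restrict G W) M → ∀ s ∈ W, s ∉ supp M →
    ∃ (n : ℕ∞) (f : ℕ → V), IsAugmentingPath (restrict G W) M n f s

theorem natCast_lt_of_le {n : ℕ∞} {a b : ℕ} (hab : a ≤ b) (hb : (b : ℕ∞) < n) :
    (a : ℕ∞) < n :=
  (Nat.cast_le.mpr hab).trans_lt hb

section

variable {G : SimpleGraph V} {M M₀ A B : Set (Sym2 V)} {n : ℕ∞} {f : ℕ → V}
  {s v w x y z : V}

theorem mem_supp_iff : v ∈ supp M ↔ ∃ w, s(v, w) ∈ M := by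
  constructor
  · rintro ⟨e, he, hv⟩
    induction e with
    | _ a b =>
      rcases Sym2.mem_iff.mp hv with rfl | rfl
      · exact ⟨b, he⟩
      · exact ⟨a, Sym2.eq_swap ▸ he⟩
  · rintro ⟨w, hw⟩
    exact ⟨_, hw, Sym2.mem_mk_left _ _⟩

open Classical in
/-- The partner of `v` in `M`, with junk value `v` when `v ∉ supp M`. -/
noncomputable def mate (M : Set (Sym2 V)) (v : V) : V :=
  if h : ∃ w, s(v, w) ∈ M then h.choose else v

theorem mate_mem (h : v ∈ supp M) : s(v, mate M v) ∈ M := by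
  have h' := mem_supp_iff.mp h
  rw [mate, dif_pos h']
  exact h'.choose_spec

theorem IsMatching.ne_of_mem (hM : IsMatching G M) (h : s(v, w) ∈ M) : v ≠ w :=
  (hM.1 h).ne

theorem IsMatching.eq_of_mem (hM : IsMatching G M) (hx : s(v, x) ∈ M) (hy : s(v, y) ∈ M) :
    x = y :=
  Sym2.congr_right.mp (hM.2 v _ hx _ hy (Sym2.mem_mk_left _ _) (Sym2.mem_mk_left _ _))

theorem IsMatching.mate_eq (hM : IsMatching G M) (h : s(v, w) ∈ M) : mate M v = w :=
  hM.eq_of_mem (mate_mem ⟨_, h, Sym2.mem_mk_left _ _⟩) h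

theorem IsMatching.notMem_of_alternating {N : Set (Sym2 V)} (hM : IsMatching G M)
    (hxy : s(x, y) ∈ M) (hxy' : s(x, y) ∉ N) (hyz : s(y, z) ∈ N) : s(y, z) ∉ M := by
  intro hyz'
  obtain rfl : z = x := hM.eq_of_mem hyz' (Sym2.eq_swap ▸ hxy)
  exact hxy' (Sym2.eq_swap ▸ hyz)

def pathEdges (n : ℕ∞) (f : ℕ → V) : Set (Sym2 V) :=
  {e | ∃ i : ℕ, ((i + 1 : ℕ) : ℕ∞) < n ∧ s(f i, f (i + 1)) = e}

namespace IsAugmentingPath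

theorem edge_mem_iff_odd (hf : IsAugmentingPath G M n f s) {i : ℕ}
    (hi : ((i + 1 : ℕ) : ℕ∞) < n) : s(f i, f (i + 1)) ∈ M ↔ Odd i := by
  induction i with
  | zero =>
    refine iff_of_false (fun h => hf.2.2.2.2.1 ?_) Nat.not_odd_zero
    exact hf.2.2.2.1 ▸ ⟨_, h, Sym2.mem_mk_left _ _⟩
  | succ i ih =>
    rw [Nat.odd_add_one, ← ih (natCast_lt_of_le (by omega) hi)]
    exact iff_not_comm.mp (hf.2.1 i (by exact_mod_cast hi))

theorem succ_lt_of_mem_supp (hf : IsAugmentingPath G M n f s) {k : ℕ} (hk : (k : ℕ∞) < n)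
    (hv : f k ∈ supp M) : ((k + 1 : ℕ) : ℕ∞) < n := by
  rcases (ENat.natCast_add_one_le_iff.mpr hk).lt_or_eq with h | h
  · exact_mod_cast h
  · exact absurd hv (hf.2.2.2.2.2 k h.symm)

theorem exists_odd_edge_of_mem_supp (hf : IsAugmentingPath G M n f s) {k : ℕ}
    (hk : (k : ℕ∞) < n) (hv : f k ∈ supp M) :
    ∃ i, Odd i ∧ ((i + 1 : ℕ) : ℕ∞) < n ∧ (k = i ∨ k = i + 1) := by
  rcases Nat.even_or_odd k with hk₂ | hk₂
  · obtain ⟨i, rfl⟩ : ∃ i, k = i + 1 := by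
      refine Nat.exists_eq_add_one.mpr (Nat.pos_of_ne_zero ?_)
      rintro rfl
      exact hf.2.2.2.2.1 (hf.2.2.2.1 ▸ hv)
    exact ⟨i, by simpa [Nat.even_add_one] using hk₂, hk, Or.inr rfl⟩
  · exact ⟨k, hk₂, hf.succ_lt_of_mem_supp hk hv, Or.inl rfl⟩

theorem mem_pathEdges_of_mem (hf : IsAugmentingPath G M n f s) (hM : IsMatching G M)
    {k : ℕ} (hk : (k : ℕ∞) < n) {e : Sym2 V} (he : e ∈ M) (hv : f k ∈ e) :
    e ∈ pathEdges n f := by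
  obtain ⟨i, hodd, hi, hki⟩ := hf.exists_odd_edge_of_mem_supp hk ⟨e, he, hv⟩
  refine ⟨i, hi, hM.2 (f k) _ ((hf.edge_mem_iff_odd hi).mpr hodd) e he ?_ hv⟩
  rcases hki with rfl | rfl
  exacts [Sym2.mem_mk_left _ _, Sym2.mem_mk_right _ _]

theorem edge_mem_symmDiff (hf : IsAugmentingPath G M n f s) {i : ℕ}
    (hi : ((i + 1 : ℕ) : ℕ∞) < n) (heven : Even i) :
    s(f i, f (i + 1)) ∈ symmDiff M (pathEdges n f) :=
  Set.mem_symmDiff.mpr <| Or.inr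
    ⟨⟨i, hi, rfl⟩, fun h => Nat.not_odd_iff_even.mpr heven ((hf.edge_mem_iff_odd hi).mp h)⟩

theorem isMatching_symmDiff (hf : IsAugmentingPath G M n f s) (hM : IsMatching G M) :
    IsMatching G (symmDiff M (pathEdges n f)) := by
  refine ⟨fun e he => ?_, fun v e he e' he' hv hv' => ?_⟩
  · rcases Set.mem_symmDiff.mp he with ⟨he, -⟩ | ⟨⟨i, hi, rfl⟩, -⟩
    exacts [hM.1 he, hf.1.2.2 i (by exact_mod_cast hi)]
  have mixed : ∀ {e : Sym2 V} {i : ℕ}, e ∈ M → e ∉ pathEdges n f →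
      ((i + 1 : ℕ) : ℕ∞) < n → v ∈ e → v ∉ s(f i, f (i + 1)) := by
    intro e i he heP hi hv hvi
    rcases Sym2.mem_iff.mp hvi with rfl | rfl
    exacts [heP (hf.mem_pathEdges_of_mem hM (natCast_lt_of_le i.le_succ hi) he hv),
      heP (hf.mem_pathEdges_of_mem hM hi he hv)]
  rcases Set.mem_symmDiff.mp he with ⟨heM, heP⟩ | ⟨⟨i, hi, rfl⟩, heM⟩ <;>
    rcases Set.mem_symmDiff.mp he' with ⟨he'M, he'P⟩ | ⟨⟨j, hj, rfl⟩, he'M⟩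
  · exact hM.2 v e heM e' he'M hv hv'
  · exact (mixed heM heP hj hv hv').elim
  · exact (mixed he'M he'P hi hv' hv).elim
  -- two path edges outside `M` are both at even positions, so sharing a vertex forces `i = j`
  have hi₂ := Nat.not_odd_iff.mp ((hf.edge_mem_iff_odd hi).not.mp heM)
  have hj₂ := Nat.not_odd_iff.mp ((hf.edge_mem_iff_odd hj).not.mp he'M)
  have hi₀ := natCast_lt_of_le i.le_succ hi
  have hj₀ := natCast_lt_of_le j.le_succ hj
  obtain rfl : i = j := by
    rcases Sym2.mem_iff.mp hv with rfl | rfl <;> rcases Sym2.mem_iff.mp hv' with h | h <;>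
      have := hf.1.2.1 _ _ (by assumption) (by assumption) h <;> omega
  rfl

theorem supp_subset_supp_symmDiff (hf : IsAugmentingPath G M n f s) :
    supp M ⊆ supp (symmDiff M (pathEdges n f)) := by
  rintro v ⟨e, he, hv⟩
  by_cases heP : e ∈ pathEdges n f
  · obtain ⟨i, hi, rfl⟩ := heP
    have hodd := (hf.edge_mem_iff_odd hi).mp he
    rcases Sym2.mem_iff.mp hv with rfl | rfl
    · obtain ⟨j, rfl⟩ := Nat.exists_eq_add_one.mpr hodd.pos
      exact ⟨_, hf.edge_mem_symmDiff (natCast_lt_of_le (by omega) hi)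
        (by simpa [Nat.odd_add_one] using hodd), Sym2.mem_mk_right _ _⟩
    · have hi' := hf.succ_lt_of_mem_supp hi ⟨_, he, Sym2.mem_mk_right _ _⟩
      exact ⟨_, hf.edge_mem_symmDiff hi' hodd.add_one, Sym2.mem_mk_left _ _⟩
  · exact ⟨e, Set.mem_symmDiff.mpr (Or.inl ⟨he, heP⟩), hv⟩

end IsAugmentingPath

noncomputable def altWalk (A B : Set (Sym2 V)) (s : V) : ℕ → V
  | 0 => s
  | i + 1 => if Even i then mate A (altWalk A B s i) else mate B (altWalk A B s i)

theorem altWalk_edge (hA : IsMatching G A) (hB : IsMatching G B) (hsA : s ∈ supp A)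
    (hsB : s ∉ supp B) (hBA : supp B ⊆ supp A) {i : ℕ}
    (hD : ∀ t ≤ i, Odd t → altWalk A B s t ∈ supp B) :
    (Even i → s(altWalk A B s i, altWalk A B s (i + 1)) ∈ A ∧
        s(altWalk A B s i, altWalk A B s (i + 1)) ∉ B) ∧
      (Odd i → s(altWalk A B s i, altWalk A B s (i + 1)) ∈ B ∧
        s(altWalk A B s i, altWalk A B s (i + 1)) ∉ A) := by
  induction i with
  | zero =>
    refine ⟨fun _ => ⟨mate_mem hsA, fun h => hsB ⟨_, h, Sym2.mem_mk_left _ _⟩⟩,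
      fun h => absurd h Nat.not_odd_zero⟩
  | succ i ih =>
    obtain ⟨ihA, ihB⟩ := ih fun t ht => hD t (by omega)
    set g := altWalk A B s
    constructor
    · intro heven
      have hodd : Odd i := by simpa [Nat.even_add_one] using heven
      obtain ⟨hB_i, hA_i⟩ := ihB hodd
      have hmem : s(g (i + 1), g (i + 2)) ∈ A := by
        rw [show g (i + 2) = mate A (g (i + 1)) from if_pos heven]
        exact mate_mem (hBA ⟨_, hB_i, Sym2.mem_mk_right _ _⟩)
      exact ⟨hmem, hB.notMem_of_alternating hB_i hA_i hmem⟩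
    · intro hodd
      have heven : Even i := by simpa [Nat.odd_add_one] using hodd
      obtain ⟨hA_i, hB_i⟩ := ihA heven
      have hmem : s(g (i + 1), g (i + 2)) ∈ B := by
        rw [show g (i + 2) = mate B (g (i + 1)) from if_neg (Nat.not_even_iff_odd.mpr hodd)]
        exact mate_mem (hD (i + 1) le_rfl hodd)
      exact ⟨hmem, hA.notMem_of_alternating hA_i hB_i hmem⟩

theorem injOn_Iic_of_alternating (hA : IsMatching G A) (hB : IsMatching G B) {g : ℕ → V}
    {N : ℕ} (hs : g 0 ∉ supp B) (hA_even : ∀ i < N, Even i → s(g i, g (i + 1)) ∈ A)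
    (hB_odd : ∀ i < N, Odd i → s(g i, g (i + 1)) ∈ B) : Set.InjOn g (Set.Iic N) := by
  have same_mate : ∀ i < N, ∀ j < N, (Even i ↔ Even j) → ∀ {v x y : V},
      s(v, x) = s(g i, g (i + 1)) → s(v, y) = s(g j, g (j + 1)) → x = y := by
    intro i hi j hj hij v x y hx hy
    rcases Nat.even_or_odd i with h | h
    · exact hA.eq_of_mem (hx ▸ hA_even i hi h) (hy ▸ hA_even j hj (hij.mp h))
    · have h' : Odd j := by grind
      exact hB.eq_of_mem (hx ▸ hB_odd i hi h) (hy ▸ hB_odd j hj h')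
  have no_loop : ∀ j < N, g j ≠ g (j + 1) := by
    intro j hj
    rcases Nat.even_or_odd j with h | h
    exacts [hA.ne_of_mem (hA_even j hj h), hB.ne_of_mem (hB_odd j hj h)]
  -- Walking back from a repetition `g i = g (j + 1)` yields a shorter one, down to a loop or to
  -- `g 0` being covered by `B`.
  have hne : ∀ j ≤ N, ∀ i < j, g i ≠ g j := by
    intro j
    induction j using Nat.strong_induction_on with
    | _ j ih =>
      intro hjN i hij heq
      obtain ⟨j, rfl⟩ := Nat.exists_eq_add_one.mpr (i.zero_le.trans_lt hij)
      by_cases hpar : Even i ↔ Even j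
      · have h := same_mate i (by omega) j (by omega) hpar (v := g i) rfl
          (by rw [heq, Sym2.eq_swap])
        rcases Nat.lt_or_ge (i + 1) j with hlt | hge
        · exact ih j (by omega) (by omega) (i + 1) hlt h
        · obtain rfl : i = j := by
            rcases Nat.even_or_odd i with hi | hi <;> grind
          exact no_loop i (by omega) heq
      · rcases i with _ | i
        · have hj : Odd j := by grind
          exact hs ⟨_, hB_odd j (by omega) hj, heq ▸ Sym2.mem_mk_right _ _⟩
        · have hpar' : Even i ↔ Even j := by grind
          have h := same_mate i (by omega) j (by omega) hpar' (v := g (i + 1))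
            Sym2.eq_swap (by rw [heq, Sym2.eq_swap])
          exact ih j (by omega) (by omega) i (by omega) h
  intro i hi j hj h
  rcases lt_trichotomy i j with hij | rfl | hij
  exacts [absurd h (hne j hj i hij), rfl, absurd h.symm (hne i hi j hij)]

theorem altWalk_isAugmentingPath (hA : IsMatching G A) (hB : IsMatching G B)
    (hsA : s ∈ supp A) (hsB : s ∉ supp B) (hBA : supp B ⊆ supp A) {n : ℕ∞} (h2n : 2 < n)
    (hD : ∀ t : ℕ, ((t + 1 : ℕ) : ℕ∞) < n → Odd t → altWalk A B s t ∈ supp B)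
    (hlast : ∀ k : ℕ, n = k + 1 → altWalk A B s k ∉ supp B) :
    IsAugmentingPath G B n (altWalk A B s) s ∧ IsProper B n (altWalk A B s) := by
  set g := altWalk A B s
  have hedge : ∀ i : ℕ, ((i + 1 : ℕ) : ℕ∞) < n →
      (Even i → s(g i, g (i + 1)) ∈ A ∧ s(g i, g (i + 1)) ∉ B) ∧
        (Odd i → s(g i, g (i + 1)) ∈ B ∧ s(g i, g (i + 1)) ∉ A) := fun i hi =>
    altWalk_edge hA hB hsA hsB hBA fun t ht => hD t (natCast_lt_of_le (by omega) hi)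
  have hB_iff : ∀ i : ℕ, ((i + 1 : ℕ) : ℕ∞) < n → (s(g i, g (i + 1)) ∈ B ↔ Odd i) :=
    fun i hi => ⟨fun h => (Nat.even_or_odd i).resolve_left fun he => ((hedge i hi).1 he).2 h,
      fun ho => ((hedge i hi).2 ho).1⟩
  have h1n : (1 : ℕ∞) < n := lt_trans (by norm_num) h2n
  refine ⟨⟨⟨h1n.le, fun i j hi hj h => ?_, fun i hi => ?_⟩, fun i hi => ?_, h1n, rfl, hsB,
    hlast⟩, 1, by norm_num [h2n], (hB_iff 1 (by norm_num [h2n])).mpr odd_one⟩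
  · have hij : ((max i j : ℕ) : ℕ∞) < n := by
      rcases le_total i j with h | h <;> simpa [h]
    refine injOn_Iic_of_alternating hA hB (N := max i j) hsB
      (fun k hk he => ((hedge k (natCast_lt_of_le hk hij)).1 he).1)
      (fun k hk ho => ((hedge k (natCast_lt_of_le hk hij)).2 ho).1)
      (le_max_left i j) (le_max_right i j) h
  · have hi : ((i + 1 : ℕ) : ℕ∞) < n := by exact_mod_cast hi
    rcases Nat.even_or_odd i with h | h
    exacts [hA.1 ((hedge i hi).1 h).1, hB.1 ((hedge i hi).2 h).1]
  · have hi : ((i + 1 + 1 : ℕ) : ℕ∞) < n := by exact_mod_cast hi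
    rw [hB_iff i (natCast_lt_of_le (by omega) hi), hB_iff (i + 1) hi, Nat.odd_add_one, not_not]

theorem exists_proper_augmentingPath_of_supp_subset (hA : IsMatching G A)
    (hB : IsMatching G B) (hsA : s ∈ supp A) (hsB : s ∉ supp B) (hBA : supp B ⊆ supp A)
    (hmate : mate A s ∈ supp B) :
    ∃ (n : ℕ∞) (g : ℕ → V), IsAugmentingPath G B n g s ∧ IsProper B n g := by
  by_cases hall : ∀ t, Odd t → altWalk A B s t ∈ supp B
  · exact ⟨⊤, _, altWalk_isAugmentingPath hA hB hsA hsB hBA (WithTop.natCast_lt_top 2)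
      (fun t _ => hall t) fun k hk => absurd hk.symm (by simp)⟩
  · push Not at hall
    classical
    let j := Nat.find hall
    have hj : Odd j ∧ altWalk A B s j ∉ supp B := Nat.find_spec hall
    have hj1 : j ≠ 1 := fun h => hj.2 (h ▸ hmate)
    refine ⟨(j : ℕ∞) + 1, _, altWalk_isAugmentingPath hA hB hsA hsB hBA ?_ ?_ ?_⟩
    · have : 3 ≤ j := by rcases hj.1 with ⟨k, hk⟩; omega
      exact_mod_cast (by omega : 2 < j + 1)
    · intro t ht hodd
      by_contra hB
      have ht : t + 1 < j + 1 := by exact_mod_cast ht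
      exact Nat.find_min hall (by omega) ⟨hodd, hB⟩
    · intro k hk
      obtain rfl : j = k := by
        have : j + 1 = k + 1 := by exact_mod_cast hk
        omega
      exact hj.2

theorem IsAugmentingPath.exists_proper_of_supp_eq (hf : IsAugmentingPath G M n f s)
    (hp : IsProper M n f) (hM : IsMatching G M) (hM₀ : IsMatching G M₀)
    (hsupp : supp M₀ = supp M) :
    ∃ (n' : ℕ∞) (g : ℕ → V), IsAugmentingPath G M₀ n' g s ∧ IsProper M₀ n' g := by
  have hM' := hf.isMatching_symmDiff hM
  have hs : s(s, f 1) ∈ symmDiff M (pathEdges n f) := by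
    simpa [hf.2.2.2.1] using
      hf.edge_mem_symmDiff (i := 0) (by exact_mod_cast hf.2.2.1) Even.zero
  have hf₁ : f 1 ∈ supp M := by
    obtain ⟨i, hi, hiM⟩ := hp
    have hi : ((i + 1 : ℕ) : ℕ∞) < n := by exact_mod_cast hi
    have h₂ : ((1 + 1 : ℕ) : ℕ∞) < n :=
      natCast_lt_of_le (by have := ((hf.edge_mem_iff_odd hi).mp hiM).pos; omega) hi
    exact ⟨_, (hf.edge_mem_iff_odd h₂).mpr odd_one, Sym2.mem_mk_left _ _⟩
  refine exists_proper_augmentingPath_of_supp_subset hM' hM₀ ⟨_, hs, Sym2.mem_mk_left _ _⟩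
    (hsupp ▸ hf.2.2.2.2.1) (hsupp ▸ hf.supp_subset_supp_symmDiff) ?_
  rwa [hM'.mate_eq hs, hsupp]

theorem IndepMatching.of_supp_eq (h₀ : IndepMatching G M₀) (hM : IsMatching G M)
    (hsupp : supp M₀ = supp M) : IndepMatching G M :=
  ⟨hM, fun ⟨s, _, _, hf, hp⟩ =>
    let ⟨n', g, hg⟩ := hf.exists_proper_of_supp_eq hp hM h₀.1 hsupp
    h₀.2 ⟨s, n', g, hg⟩⟩

end

theorem indepSubgraph_iff_exists_indep_perfect_matching_general {V : Type*}
    (G : SimpleGraph V) (W : Set V) :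
    IndepSubgraph G W ↔
      ∃ M : Set (Sym2 V), IsMatching G M ∧ supp M = W ∧ IndepMatching G M := by
  constructor
  · rintro ⟨⟨M, hM, hW⟩, hindep⟩
    exact ⟨M, hM, hW, hindep M hM hW⟩
  · rintro ⟨M₀, hM₀, hW₀, hindep₀⟩
    refine ⟨⟨M₀, hM₀, hW₀⟩, fun M hM hW => ?_⟩
    exact hindep₀.of_supp_eq hM (hW₀.trans hW.symm)

/-- `W` is an independent subgraph of `G` iff `G[W]` has a perfect
matching which is an independent matching of `G`. -/
theorem indepSubgraph_iff_exists_indep_perfect_matching {V : Type*} [Countable V]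
    (G : SimpleGraph V) (W : Set V) :
    IndepSubgraph G W ↔
      ∃ M : Set (Sym2 V), IsMatching G M ∧ supp M = W ∧ IndepMatching G M :=
  indepSubgraph_iff_exists_indep_perfect_matching_general G W

end PaperMatchings
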